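/- Let J = (1/√3)·[[0,1,−1,−1],[−1,0,−1,1],[1,1,0,1],[1,−1,−1,0]]. Then J is orthogonal (JᵀJ = I) and J² = −I, so J defines a complex structure on ℝ⁴; moreover the centralizer of J in the group G of 4×4 signed permutation matrices equals the subgroup generated by γ1 = ρ1ρ2ρ3ρ2 and γ2 = ρ2ρ0ρ1ρ0, this centralizer has order 24, and the generators satisfy γ1³ = I and γ1γ2γ1 = γ2γ1γ2 (the defining relations of the unitary group 3[3]3 of the regular complex polygon 3{3}3). -/

import Mathlib

/-
`J = K / √3` for the integer matrix `K = Kmat`, which satisfies `KᵀK = 3` and `K² = -3`.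
Every element of `G` is a signed permutation matrix, and such a matrix commutes with `J` iff its
integer form commutes with `K`. This turns the centralizer into a decidable computation over the
384 signed permutations of `Fin 4`: the ones commuting with `K` are all of the form
`γ1^a γ2^b γ1^c γ2^d` with `a, b, c, d < 3`, and these products are 24 distinct matrices.
Conversely `γ1` and `γ2` lie in `G` and commute with `K`. The two relations are integer matrix
identities as well.
-/

open Matrix

/-- The general linear group of `4 × 4` real matrices. -/
abbrev GL4 := GL (Fin 4) ℝ

/-- rho0 : the reflection `ρ0 = diag(−1,1,1,1)`. -/
def rho0 : GL4 :=
  ⟨!![-1,0,0,0; 0,1,0,0; 0,0,1,0; 0,0,0,1],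
   !![-1,0,0,0; 0,1,0,0; 0,0,1,0; 0,0,0,1],
   by ext i j; fin_cases i <;> fin_cases j <;>
      simp [Matrix.mul_apply, Fin.sum_univ_four, Matrix.one_apply, Matrix.vecHead, Matrix.vecTail],
   by ext i j; fin_cases i <;> fin_cases j <;>
      simp [Matrix.mul_apply, Fin.sum_univ_four, Matrix.one_apply, Matrix.vecHead, Matrix.vecTail]⟩

/-- rho1 : the permutation matrix transposing coordinates 1 and 2. -/
def rho1 : GL4 :=
  ⟨!![0,1,0,0; 1,0,0,0; 0,0,1,0; 0,0,0,1],
   !![0,1,0,0; 1,0,0,0; 0,0,1,0; 0,0,0,1],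
   by ext i j; fin_cases i <;> fin_cases j <;>
      simp [Matrix.mul_apply, Fin.sum_univ_four, Matrix.one_apply, Matrix.vecHead, Matrix.vecTail],
   by ext i j; fin_cases i <;> fin_cases j <;>
      simp [Matrix.mul_apply, Fin.sum_univ_four, Matrix.one_apply, Matrix.vecHead, Matrix.vecTail]⟩

/-- rho2 : the permutation matrix transposing coordinates 2 and 3. -/
def rho2 : GL4 :=
  ⟨!![1,0,0,0; 0,0,1,0; 0,1,0,0; 0,0,0,1],
   !![1,0,0,0; 0,0,1,0; 0,1,0,0; 0,0,0,1],
   by ext i j; fin_cases i <;> fin_cases j <;>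
      simp [Matrix.mul_apply, Fin.sum_univ_four, Matrix.one_apply, Matrix.vecHead, Matrix.vecTail],
   by ext i j; fin_cases i <;> fin_cases j <;>
      simp [Matrix.mul_apply, Fin.sum_univ_four, Matrix.one_apply, Matrix.vecHead, Matrix.vecTail]⟩

/-- rho3 : the permutation matrix transposing coordinates 3 and 4. -/
def rho3 : GL4 :=
  ⟨!![1,0,0,0; 0,1,0,0; 0,0,0,1; 0,0,1,0],
   !![1,0,0,0; 0,1,0,0; 0,0,0,1; 0,0,1,0],
   by ext i j; fin_cases i <;> fin_cases j <;>
      simp [Matrix.mul_apply, Fin.sum_univ_four, Matrix.one_apply, Matrix.vecHead, Matrix.vecTail],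
   by ext i j; fin_cases i <;> fin_cases j <;>
      simp [Matrix.mul_apply, Fin.sum_univ_four, Matrix.one_apply, Matrix.vecHead, Matrix.vecTail]⟩


/-- The complex-structure matrix `J`. -/
noncomputable def Jmat : Matrix (Fin 4) (Fin 4) ℝ :=
  (1 / Real.sqrt 3) • !![0,1,-1,-1; -1,0,-1,1; 1,1,0,1; 1,-1,-1,0]

/-- `γ1 = ρ1 ρ2 ρ3 ρ2`. -/
def gamma1 : GL4 := rho1 * rho2 * rho3 * rho2

/-- `γ2 = ρ2 ρ0 ρ1 ρ0`. -/
def gamma2 : GL4 := rho2 * rho0 * rho1 * rho0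

open Equiv

namespace Matrix

variable {n R : Type*} [DecidableEq n]

def signedPerm [Ring R] (σ : Perm n) (s : n → ℤˣ) : Matrix n n R :=
  of fun i j => if i = σ j then ((s j : ℤ) : R) else 0

theorem signedPerm_mul [Fintype n] [Ring R] (σ τ : Perm n) (s t : n → ℤˣ) :
    (signedPerm σ s * signedPerm τ t : Matrix n n R) =
      signedPerm (σ * τ) fun j => s (τ j) * t j := by
  ext i j
  rw [mul_apply, Finset.sum_eq_single (τ j) (fun k _ hk => by simp [signedPerm, hk]) (by simp)]
  by_cases h : i = σ (τ j) <;> simp [signedPerm, h]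

theorem signedPerm_one [Ring R] : (signedPerm 1 1 : Matrix n n R) = 1 := by
  ext i j
  by_cases h : i = j <;> simp [signedPerm, one_apply, h]

theorem map_signedPerm [Ring R] (f : ℤ →+* R) (σ : Perm n) (s : n → ℤˣ) :
    (signedPerm σ s : Matrix n n ℤ).map f = signedPerm σ s := by
  ext i j
  by_cases h : i = σ j <;> simp [signedPerm, h]

variable (n R) in
def signedPermGroup [Fintype n] [Ring R] : Subgroup (GL n R) where
  carrier := {g | ∃ σ s, (g : Matrix n n R) = signedPerm σ s}
  mul_mem' := by
    rintro _ _ ⟨σ, s, hg⟩ ⟨τ, t, hh⟩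
    exact ⟨_, _, by rw [Units.val_mul, hg, hh, signedPerm_mul]⟩
  one_mem' := ⟨1, 1, signedPerm_one.symm⟩
  inv_mem' := by
    rintro g ⟨σ, s, hg⟩
    refine ⟨σ⁻¹, fun j => s (σ⁻¹ j), Units.inv_eq_of_mul_eq_one_right ?_⟩
    simp [hg, signedPerm_mul, ← Pi.one_def, signedPerm_one]

end Matrix

theorem coe_rho0 : (rho0 : Matrix (Fin 4) (Fin 4) ℝ) = signedPerm 1 ![-1, 1, 1, 1] := by
  ext i j; fin_cases i <;> fin_cases j <;> simp [rho0, signedPerm]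

theorem coe_rho1 : (rho1 : Matrix (Fin 4) (Fin 4) ℝ) = signedPerm (swap 0 1) 1 := by
  ext i j; fin_cases i <;> fin_cases j <;> simp [rho1, signedPerm, swap_apply_of_ne_of_ne]

theorem coe_rho2 : (rho2 : Matrix (Fin 4) (Fin 4) ℝ) = signedPerm (swap 1 2) 1 := by
  ext i j; fin_cases i <;> fin_cases j <;> simp [rho2, signedPerm, swap_apply_of_ne_of_ne]

theorem coe_rho3 : (rho3 : Matrix (Fin 4) (Fin 4) ℝ) = signedPerm (swap 2 3) 1 := by
  ext i j; fin_cases i <;> fin_cases j <;> simp [rho3, signedPerm, swap_apply_of_ne_of_ne]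

def Kmat : Matrix (Fin 4) (Fin 4) ℤ := !![0,1,-1,-1; -1,0,-1,1; 1,1,0,1; 1,-1,-1,0]

theorem Jmat_eq : Jmat = (1 / Real.sqrt 3) • Kmat.map (Int.castRingHom ℝ) := by
  unfold Jmat
  congr 1
  ext i j; fin_cases i <;> fin_cases j <;> simp [Kmat]

theorem Kmat_transpose_mul_self : Kmatᵀ * Kmat = 3 := by decide

theorem Kmat_mul_self : Kmat * Kmat = -3 := by decide

theorem one_div_sqrt_three_mul_self_smul_three {n : Type*} [Fintype n] [DecidableEq n] :
    (1 / Real.sqrt 3 * (1 / Real.sqrt 3)) • (3 : Matrix n n ℝ) = 1 := by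
  have h : 1 / Real.sqrt 3 * (1 / Real.sqrt 3) * 3 = 1 := by field_simp; simp
  rw [← map_ofNat (algebraMap ℝ (Matrix n n ℝ)) 3, Algebra.algebraMap_eq_smul_one, smul_smul, h,
    one_smul]

theorem Jmat_transpose_mul_self : Jmatᵀ * Jmat = 1 := by
  rw [Jmat_eq, transpose_smul, smul_mul_smul_comm, ← transpose_map, ← Matrix.map_mul,
    Kmat_transpose_mul_self, ← RingHom.mapMatrix_apply, map_ofNat,
    one_div_sqrt_three_mul_self_smul_three]

theorem Jmat_mul_self : Jmat * Jmat = -1 := by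
  rw [Jmat_eq, smul_mul_smul_comm, ← Matrix.map_mul, Kmat_mul_self, ← RingHom.mapMatrix_apply,
    map_neg, map_ofNat, smul_neg, one_div_sqrt_three_mul_self_smul_three]

-- `J² = -1` makes `J` a unit, so its commutant in `GL4` is a `Subgroup.centralizer`.
noncomputable def Junit : GL4 :=
  ⟨Jmat, -Jmat, by rw [mul_neg, Jmat_mul_self, neg_neg], by rw [neg_mul, Jmat_mul_self, neg_neg]⟩

theorem mem_centralizer_Junit_iff {g : GL4} :
    g ∈ Subgroup.centralizer {Junit} ↔ (g : Matrix (Fin 4) (Fin 4) ℝ) * Jmat = Jmat * g := by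
  rw [Subgroup.mem_centralizer_singleton_iff, Units.ext_iff]
  rfl

theorem map_mul_Jmat_eq_iff (M : Matrix (Fin 4) (Fin 4) ℤ) :
    M.map (Int.castRingHom ℝ) * Jmat = Jmat * M.map (Int.castRingHom ℝ) ↔
      M * Kmat = Kmat * M := by
  rw [Jmat_eq, mul_smul_comm, smul_mul_assoc, ← Matrix.map_mul, ← Matrix.map_mul,
    (smul_right_injective _ (by positivity : 1 / Real.sqrt 3 ≠ 0)).eq_iff,
    (map_injective (Int.castRingHom ℝ).injective_int).eq_iff]

def gamma1Int : Matrix (Fin 4) (Fin 4) ℤ :=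
  signedPerm (swap 0 1) 1 * signedPerm (swap 1 2) 1 * signedPerm (swap 2 3) 1 *
    signedPerm (swap 1 2) 1

def gamma2Int : Matrix (Fin 4) (Fin 4) ℤ :=
  signedPerm (swap 1 2) 1 * signedPerm 1 ![-1, 1, 1, 1] * signedPerm (swap 0 1) 1 *
    signedPerm 1 ![-1, 1, 1, 1]

theorem coe_gamma1 : (gamma1 : Matrix (Fin 4) (Fin 4) ℝ) = gamma1Int.map (Int.castRingHom ℝ) := by
  simp only [gamma1, gamma1Int, Units.val_mul, coe_rho1, coe_rho2, coe_rho3, Matrix.map_mul,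
    map_signedPerm]

theorem coe_gamma2 : (gamma2 : Matrix (Fin 4) (Fin 4) ℝ) = gamma2Int.map (Int.castRingHom ℝ) := by
  simp only [gamma2, gamma2Int, Units.val_mul, coe_rho0, coe_rho1, coe_rho2, Matrix.map_mul,
    map_signedPerm]

theorem gamma1Int_mul_Kmat : gamma1Int * Kmat = Kmat * gamma1Int := by decide

theorem gamma2Int_mul_Kmat : gamma2Int * Kmat = Kmat * gamma2Int := by decide

theorem gamma1Int_pow_three : gamma1Int ^ 3 = 1 := by decide

theorem gamma1Int_mul_gamma2Int_mul_gamma1Int :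
    gamma1Int * gamma2Int * gamma1Int = gamma2Int * gamma1Int * gamma2Int := by decide

def altPowProd {M : Type*} [Monoid M] (x y : M) (w : Fin 3 × Fin 3 × Fin 3 × Fin 3) : M :=
  x ^ (w.1 : ℕ) * y ^ (w.2.1 : ℕ) * x ^ (w.2.2.1 : ℕ) * y ^ (w.2.2.2 : ℕ)

theorem map_altPowProd {M N F : Type*} [Monoid M] [Monoid N] [FunLike F M N]
    [MonoidHomClass F M N] (f : F) (x y : M) (w : Fin 3 × Fin 3 × Fin 3 × Fin 3) :
    f (altPowProd x y w) = altPowProd (f x) (f y) w := by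
  simp only [altPowProd, map_mul, map_pow]

theorem range_altPowProd_subset_closure {G : Type*} [Group G] (x y : G) :
    Set.range (altPowProd x y) ⊆ Subgroup.closure {x, y} := by
  rintro _ ⟨w, rfl⟩
  have hx : x ∈ Subgroup.closure {x, y} := Subgroup.subset_closure (by simp)
  have hy : y ∈ Subgroup.closure {x, y} := Subgroup.subset_closure (by simp)
  exact mul_mem (mul_mem (mul_mem (pow_mem hx _) (pow_mem hy _)) (pow_mem hx _)) (pow_mem hy _)

theorem coe_altPowProd_gamma (w : Fin 3 × Fin 3 × Fin 3 × Fin 3) :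
    ((altPowProd gamma1 gamma2 w : GL4) : Matrix (Fin 4) (Fin 4) ℝ) =
      (altPowProd gamma1Int gamma2Int w).map (Int.castRingHom ℝ) := by
  have h := map_altPowProd (Units.coeHom (Matrix (Fin 4) (Fin 4) ℝ)) gamma1 gamma2 w
  simp only [Units.coeHom_apply] at h
  rw [h, coe_gamma1, coe_gamma2]
  exact (map_altPowProd (Int.castRingHom ℝ).mapMatrix _ _ w).symm

set_option maxRecDepth 10000 in
theorem exists_altPowProd_of_signedPerm_mul_Kmat :
    ∀ (σ : Perm (Fin 4)) (s : Fin 4 → ℤˣ), signedPerm σ s * Kmat = Kmat * signedPerm σ s →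
      ∃ w, signedPerm σ s = altPowProd gamma1Int gamma2Int w := by
  decide

set_option maxRecDepth 10000 in
theorem card_range_altPowProd_gammaInt :
    Nat.card (Set.range (altPowProd gamma1Int gamma2Int)) = 24 := by
  rw [Nat.card_eq_fintype_card]
  decide

theorem card_range_altPowProd_gamma : Nat.card (Set.range (altPowProd gamma1 gamma2)) = 24 := by
  have hval : Set.range (fun w => ((altPowProd gamma1 gamma2 w : GL4) : Matrix (Fin 4) (Fin 4) ℝ)) =
      (fun M => M.map (Int.castRingHom ℝ)) '' Set.range (altPowProd gamma1Int gamma2Int) := by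
    rw [← Set.range_comp]
    exact congrArg Set.range (funext coe_altPowProd_gamma)
  rw [← Nat.card_image_of_injective Units.val_injective, ← Set.range_comp, Function.comp_def, hval,
    Nat.card_image_of_injective (map_injective (Int.castRingHom ℝ).injective_int),
    card_range_altPowProd_gammaInt]

theorem closure_rho_le_signedPermGroup :
    Subgroup.closure {rho0, rho1, rho2, rho3} ≤ signedPermGroup (Fin 4) ℝ := by
  rw [Subgroup.closure_le]
  rintro _ (rfl | rfl | rfl | rfl)
  exacts [⟨_, _, coe_rho0⟩, ⟨_, _, coe_rho1⟩, ⟨_, _, coe_rho2⟩, ⟨_, _, coe_rho3⟩]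

theorem closure_gamma_le :
    Subgroup.closure {gamma1, gamma2} ≤
      Subgroup.closure {rho0, rho1, rho2, rho3} ⊓ Subgroup.centralizer {Junit} := by
  have mem {ρ : GL4} (h : ρ ∈ ({rho0, rho1, rho2, rho3} : Set GL4)) :
      ρ ∈ Subgroup.closure {rho0, rho1, rho2, rho3} :=
    Subgroup.subset_closure h
  rw [le_inf_iff, Subgroup.closure_le, Subgroup.closure_le]
  constructor <;> rintro _ (rfl | rfl)
  · exact mul_mem (mul_mem (mul_mem (mem (by simp)) (mem (by simp))) (mem (by simp))) (mem (by simp))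
  · exact mul_mem (mul_mem (mul_mem (mem (by simp)) (mem (by simp))) (mem (by simp))) (mem (by simp))
  · rw [SetLike.mem_coe, mem_centralizer_Junit_iff, coe_gamma1, map_mul_Jmat_eq_iff]
    exact gamma1Int_mul_Kmat
  · rw [SetLike.mem_coe, mem_centralizer_Junit_iff, coe_gamma2, map_mul_Jmat_eq_iff]
    exact gamma2Int_mul_Kmat

theorem closure_rho_inf_centralizer_subset_range :
    ((Subgroup.closure {rho0, rho1, rho2, rho3} ⊓ Subgroup.centralizer {Junit} : Subgroup GL4) :
      Set GL4) ⊆ Set.range (altPowProd gamma1 gamma2) := by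
  intro g hg
  obtain ⟨hg, hJ⟩ := Subgroup.mem_inf.1 hg
  obtain ⟨σ, s, hσs⟩ := closure_rho_le_signedPermGroup hg
  rw [← map_signedPerm (Int.castRingHom ℝ)] at hσs
  rw [mem_centralizer_Junit_iff, hσs, map_mul_Jmat_eq_iff] at hJ
  obtain ⟨w, hw⟩ := exists_altPowProd_of_signedPerm_mul_Kmat σ s hJ
  exact ⟨w, Units.ext (by rw [coe_altPowProd_gamma, ← hw, hσs])⟩

theorem closure_rho_inf_centralizer_eq :
    Subgroup.closure {rho0, rho1, rho2, rho3} ⊓ Subgroup.centralizer {Junit} =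
      Subgroup.closure {gamma1, gamma2} :=
  le_antisymm (closure_rho_inf_centralizer_subset_range.trans
    (range_altPowProd_subset_closure gamma1 gamma2)) closure_gamma_le

theorem coe_closure_gamma_eq_range :
    (Subgroup.closure {gamma1, gamma2} : Set GL4) = Set.range (altPowProd gamma1 gamma2) :=
  (Set.Subset.trans closure_gamma_le closure_rho_inf_centralizer_subset_range).antisymm
    (range_altPowProd_subset_closure gamma1 gamma2)

theorem gamma1_pow_three : gamma1 ^ 3 = 1 := by
  refine Units.ext ?_
  rw [Units.val_pow_eq_pow_val, coe_gamma1, ← RingHom.mapMatrix_apply, ← map_pow,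
    gamma1Int_pow_three, map_one, Units.val_one]

theorem gamma1_mul_gamma2_mul_gamma1 : gamma1 * gamma2 * gamma1 = gamma2 * gamma1 * gamma2 := by
  refine Units.ext ?_
  simp only [Units.val_mul, coe_gamma1, coe_gamma2, ← Matrix.map_mul,
    gamma1Int_mul_gamma2Int_mul_gamma1Int]

/-- `J` is orthogonal with `J² = −I`, its centralizer in the group `G` of signed
permutation matrices is `⟨γ1, γ2⟩` of order 24, and `γ1³ = I`,
`γ1γ2γ1 = γ2γ1γ2` (the defining relations of `3[3]3`). -/
theorem complex_structure_centralizer :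
    Jmat.transpose * Jmat = 1 ∧ Jmat * Jmat = -1 ∧
    {g : GL4 | g ∈ Subgroup.closure ({rho0, rho1, rho2, rho3} : Set GL4) ∧
        (g : Matrix (Fin 4) (Fin 4) ℝ) * Jmat = Jmat * (g : Matrix (Fin 4) (Fin 4) ℝ)}
      = ((Subgroup.closure {gamma1, gamma2} : Subgroup GL4) : Set GL4) ∧
    Nat.card (Subgroup.closure {gamma1, gamma2} : Subgroup GL4) = 24 ∧
    gamma1 ^ 3 = 1 ∧ gamma1 * gamma2 * gamma1 = gamma2 * gamma1 * gamma2 := by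
  refine ⟨Jmat_transpose_mul_self, Jmat_mul_self, ?_, ?_, gamma1_pow_three,
    gamma1_mul_gamma2_mul_gamma1⟩
  · ext g
    rw [← closure_rho_inf_centralizer_eq]
    exact (and_congr_right' mem_centralizer_Junit_iff).symm
  · rw [← SetLike.coe_sort_coe, coe_closure_gamma_eq_range, card_range_altPowProd_gamma]
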